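/- If T₁ and T₂ are triangulations of a convex polygon such that every diagonal of T₂ not in T₁ crosses exactly one diagonal of T₁, then T₂ is obtained from T₁ by simultaneously flipping a set of diagonals of T₁ no two of which belong to a common triangle of T₁; that is, each diagonal pr ∈ T₂ \ T₁ crosses a unique diagonal qs ∈ T₁ and pqr, prs are triangles of T₂. -/

import Mathlib

/-!
Let the flipped diagonal `pr ∈ T₂ \ T₁` cross `qs ∈ T₁`, with `p, q, r, s` in cyclic order. A
diagonal crossing a side of the quadrilateral `pqrs` must cross `pr` or `qs`. Hence a side that is
a diagonal lies in `T₁`: otherwise a diagonal of `T₁` crosses it, cannot cross `qs`, so crosses `pr`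
and is therefore `qs`, which shares an endpoint with the side. It also lies in `T₂`: otherwise some
`f ∈ T₂` crosses it; then `f ∉ T₁`, the side is the unique diagonal of `T₁` crossed by `f`, and
`f` cannot cross `pr ∈ T₂`, so it crosses `qs ∈ T₁` and the side would be `qs`.

Cyclic order on `ZMod m` is handled in the coordinates `(x - o).val` for a fixed origin `o`,
where every configuration question becomes linear arithmetic over `ℕ`.
-/

/-- `x` lies strictly between `a` and `b` in the cyclic order on `ZMod m`. -/
def Pbetween (m : ℕ) (a x b : ZMod m) : Prop :=
  0 < (x - a).val ∧ (x - a).val < (b - a).val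

/-- A diagonal of the convex `m`-gon: a pair of distinct non-adjacent vertices. -/
def PIsDiag (m : ℕ) (d : Finset (ZMod m)) : Prop :=
  ∃ a b : ZMod m, d = {a, b} ∧ a ≠ b ∧ a - b ≠ 1 ∧ b - a ≠ 1

/-- Two diagonals cross iff their endpoint pairs separate each other in cyclic order. -/
def PCross (m : ℕ) (d e : Finset (ZMod m)) : Prop :=
  ∃ a b c d' : ZMod m, d = {a, b} ∧ e = {c, d'} ∧
    a ≠ b ∧ a ≠ c ∧ a ≠ d' ∧ b ≠ c ∧ b ≠ d' ∧ c ≠ d' ∧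
    Xor' (Pbetween m a c b) (Pbetween m a d' b)

/-- A triangulation of the convex `m`-gon: a maximal set of pairwise non-crossing diagonals. -/
def PIsTriangulation (m : ℕ) (T : Finset (Finset (ZMod m))) : Prop :=
  (∀ d ∈ T, PIsDiag m d) ∧
  (∀ d ∈ T, ∀ e ∈ T, ¬ PCross m d e) ∧
  (∀ d, PIsDiag m d → (∀ e ∈ T, ¬ PCross m d e) → d ∈ T)

/-- `a` and `b` are joined by a boundary edge of the polygon or by a diagonal of `T`. -/
def PEdgeOrDiag (m : ℕ) (T : Finset (Finset (ZMod m))) (a b : ZMod m) : Prop :=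
  (b - a = 1 ∨ a - b = 1) ∨ ({a, b} : Finset (ZMod m)) ∈ T

/-- `p q r` form a triangle of the triangulation `T`. -/
def PTriangleOf (m : ℕ) (T : Finset (Finset (ZMod m))) (p q r : ZMod m) : Prop :=
  p ≠ q ∧ q ≠ r ∧ p ≠ r ∧
  PEdgeOrDiag m T p q ∧ PEdgeOrDiag m T q r ∧ PEdgeOrDiag m T p r

def CyclicBetween (A X B : ℕ) : Prop := (A < X ∧ X < B) ∨ (B < A ∧ (A < X ∨ X < B))

theorem Finset.pair_eq_pair_iff {α : Type*} [DecidableEq α] {x y z w : α} :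
    ({x, y} : Finset α) = {z, w} ↔ x = z ∧ y = w ∨ x = w ∧ y = z := by
  rw [← Finset.coe_inj, Finset.coe_pair, Finset.coe_pair, Set.pair_eq_pair_iff]

theorem ZMod.val_sub_of_lt {n : ℕ} [NeZero n] {a b : ZMod n} (h : a.val < b.val) :
    (a - b).val = n + a.val - b.val := by
  have hb := b.val_lt
  have hcast : ((n + a.val - b.val : ℕ) : ZMod n) = a - b := by
    rw [Nat.cast_sub (by omega)]
    simp
  rw [← hcast, ZMod.val_natCast_of_lt (by omega)]

section Coordinates

variable {m : ℕ} [NeZero m]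

lemma val_sub_injective (o : ZMod m) : Function.Injective fun a : ZMod m => (a - o).val :=
  (ZMod.val_injective m).comp sub_left_injective

lemma val_sub_inj {o a b : ZMod m} : (a - o).val = (b - o).val ↔ a = b :=
  (val_sub_injective o).eq_iff

lemma val_sub_ne {o a b : ZMod m} (h : a ≠ b) : (a - o).val ≠ (b - o).val :=
  (val_sub_injective o).ne h

lemma pbetween_iff_cyclicBetween (o a x b : ZMod m) :
    Pbetween m a x b ↔ CyclicBetween (a - o).val (x - o).val (b - o).val := by
  have hx : x - a = (x - o) - (a - o) := by ring
  have hb : b - a = (b - o) - (a - o) := by ring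
  have := (a - o).val_lt
  have := (x - o).val_lt
  have := (b - o).val_lt
  rw [Pbetween, CyclicBetween, hx, hb]
  rcases le_or_gt (a - o).val (x - o).val with h | h <;>
    rcases le_or_gt (a - o).val (b - o).val with h' | h'
  · rw [ZMod.val_sub h, ZMod.val_sub h']; omega
  · rw [ZMod.val_sub h, ZMod.val_sub_of_lt h']; omega
  · rw [ZMod.val_sub_of_lt h, ZMod.val_sub h']; omega
  · rw [ZMod.val_sub_of_lt h, ZMod.val_sub_of_lt h']; omega

lemma pcross_pair_iff (o : ZMod m) {x y z w : ZMod m} (hxy : x ≠ y) (hzw : z ≠ w) :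
    PCross m {x, y} {z, w} ↔ x ≠ z ∧ x ≠ w ∧ y ≠ z ∧ y ≠ w ∧
      Xor (CyclicBetween (x - o).val (z - o).val (y - o).val)
        (CyclicBetween (x - o).val (w - o).val (y - o).val) := by
  constructor
  · rintro ⟨a, b, c, d, hab, hcd, hab', hac, had, hbc, hbd, hcd', hsep⟩
    rw [pbetween_iff_cyclicBetween o, pbetween_iff_cyclicBetween o] at hsep
    have := val_sub_ne (o := o) hab'
    have := val_sub_ne (o := o) hac
    have := val_sub_ne (o := o) had
    have := val_sub_ne (o := o) hbc
    have := val_sub_ne (o := o) hbd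
    have := val_sub_ne (o := o) hcd'
    rw [Finset.pair_eq_pair_iff] at hab hcd
    rcases hab with ⟨rfl, rfl⟩ | ⟨rfl, rfl⟩ <;> rcases hcd with ⟨rfl, rfl⟩ | ⟨rfl, rfl⟩ <;>
      refine ⟨by assumption, by tauto, by tauto, by tauto, ?_⟩ <;>
      rcases hsep with ⟨h, h'⟩ | ⟨h, h'⟩ <;> simp only [xor_def, CyclicBetween] at h h' ⊢ <;> omega
  · rintro ⟨hxz, hxw, hyz, hyw, hsep⟩
    refine ⟨x, y, z, w, rfl, rfl, hxy, hxz, hxw, hyz, hyw, hzw, ?_⟩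
    rwa [pbetween_iff_cyclicBetween o, pbetween_iff_cyclicBetween o]

lemma PCross.symm {d e : Finset (ZMod m)} (h : PCross m d e) : PCross m e d := by
  obtain ⟨a, b, c, d, rfl, rfl, hab, hac, had, hbc, hbd, hcd, hsep⟩ := h
  rw [pbetween_iff_cyclicBetween a, pbetween_iff_cyclicBetween a] at hsep
  have := val_sub_ne (o := a) hab
  have := val_sub_ne (o := a) hac
  have := val_sub_ne (o := a) had
  have := val_sub_ne (o := a) hbc
  have := val_sub_ne (o := a) hbd
  have := val_sub_ne (o := a) hcd
  rw [pcross_pair_iff a hcd hab]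
  refine ⟨hac.symm, hbc.symm, had.symm, hbd.symm, ?_⟩
  have : (a - a).val = 0 := by simp
  rcases hsep with ⟨h, h'⟩ | ⟨h, h'⟩ <;> simp only [xor_def, CyclicBetween] at h h' ⊢ <;> omega

end Coordinates

lemma PCross.disjoint {m : ℕ} {d e : Finset (ZMod m)} (h : PCross m d e) : Disjoint d e := by
  obtain ⟨a, b, c, d, rfl, rfl, -, hac, had, hbc, hbd, -⟩ := h
  simp [hac.symm, had.symm, hbc.symm, hbd.symm]

section Quadrilateral

variable {m : ℕ}

def InCyclicOrder (p q r s : ZMod m) : Prop :=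
  0 < (q - p).val ∧ (q - p).val < (r - p).val ∧ (r - p).val < (s - p).val

def IsQuadSide (p q r s x y : ZMod m) : Prop :=
  (x = p ∧ y = q) ∨ (x = q ∧ y = r) ∨ (x = r ∧ y = s) ∨ (x = s ∧ y = p)

variable {p q r s x y : ZMod m}

lemma IsQuadSide.not_pcross (hside : IsQuadSide p q r s x y) : ¬ PCross m {x, y} {q, s} := by
  intro h
  rcases hside with ⟨rfl, rfl⟩ | ⟨rfl, rfl⟩ | ⟨rfl, rfl⟩ | ⟨rfl, rfl⟩ <;> simpa using h.disjoint

variable [NeZero m]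

lemma InCyclicOrder.pcross (ho : InCyclicOrder p q r s) : PCross m {p, r} {q, s} := by
  obtain ⟨hq, hqr, hrs⟩ := ho
  have : (p - p).val = 0 := by simp
  rw [pcross_pair_iff p (by rw [Ne, ← val_sub_inj (o := p)]; omega)
    (by rw [Ne, ← val_sub_inj (o := p)]; omega)]
  simp only [ne_eq, ← val_sub_inj (o := p), xor_def, CyclicBetween]
  omega

lemma PCross.inCyclicOrder_or (h : PCross m {p, r} {q, s}) :
    InCyclicOrder p q r s ∨ InCyclicOrder p s r q := by
  obtain ⟨a, b, c, d, hab, hcd, hab', -, -, -, -, hcd', -⟩ := id h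
  have hpr : p ≠ r := by rw [Finset.pair_eq_pair_iff] at hab; aesop
  have hqs : q ≠ s := by rw [Finset.pair_eq_pair_iff] at hcd; aesop
  have : (p - p).val = 0 := by simp
  rw [pcross_pair_iff p hpr hqs] at h
  simp only [ne_eq, ← val_sub_inj (o := p), xor_def, CyclicBetween] at h hpr hqs
  unfold InCyclicOrder
  omega

lemma InCyclicOrder.pairwise_ne (ho : InCyclicOrder p q r s) :
    p ≠ q ∧ q ≠ r ∧ p ≠ r ∧ r ≠ s ∧ p ≠ s := by
  obtain ⟨hq, hqr, hrs⟩ := ho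
  have : (p - p).val = 0 := by simp
  simp only [ne_eq, ← val_sub_inj (o := p)]
  omega

lemma IsQuadSide.ne (ho : InCyclicOrder p q r s) (hside : IsQuadSide p q r s x y) : x ≠ y := by
  obtain ⟨hpq, hqr, -, hrs, hps⟩ := ho.pairwise_ne
  rcases hside with ⟨hx, hy⟩ | ⟨hx, hy⟩ | ⟨hx, hy⟩ | ⟨hx, hy⟩ <;> subst x y <;> tauto

lemma IsQuadSide.ne_diag (ho : InCyclicOrder p q r s) (hside : IsQuadSide p q r s x y) :
    ({x, y} : Finset (ZMod m)) ≠ {q, s} := by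
  obtain ⟨hq, hqr, hrs⟩ := ho
  have : (p - p).val = 0 := by simp
  rw [Ne, Finset.pair_eq_pair_iff]
  rcases hside with ⟨hx, hy⟩ | ⟨hx, hy⟩ | ⟨hx, hy⟩ | ⟨hx, hy⟩ <;> subst x y <;>
    simp only [← val_sub_inj (o := p)] <;> omega

lemma IsQuadSide.pcross_diag_of_pcross (ho : InCyclicOrder p q r s)
    (hside : IsQuadSide p q r s x y) {f : Finset (ZMod m)} (hf : PCross m {x, y} f) :
    PCross m f {q, s} ∨ PCross m f {p, r} := by
  have hxy := hside.ne ho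
  obtain ⟨hq, hqr, hrs⟩ := ho
  have : (p - p).val = 0 := by simp
  obtain ⟨-, -, u, v, -, rfl, -, -, -, -, -, huv, -⟩ := id hf
  have hsideVal : ((x - p).val = 0 ∧ (y - p).val = (q - p).val) ∨
      ((x - p).val = (q - p).val ∧ (y - p).val = (r - p).val) ∨
      ((x - p).val = (r - p).val ∧ (y - p).val = (s - p).val) ∨
      ((x - p).val = (s - p).val ∧ (y - p).val = 0) := by
    rcases hside with ⟨hx, hy⟩ | ⟨hx, hy⟩ | ⟨hx, hy⟩ | ⟨hx, hy⟩ <;> subst x y <;> simp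
  rw [pcross_pair_iff p hxy huv] at hf
  rw [pcross_pair_iff p huv (by rw [Ne, ← val_sub_inj (o := p)]; omega),
    pcross_pair_iff p huv (by rw [Ne, ← val_sub_inj (o := p)]; omega)]
  simp only [ne_eq, ← val_sub_inj (o := p), xor_def, CyclicBetween] at hf huv ⊢
  omega

end Quadrilateral

lemma PIsTriangulation.exists_pcross_of_notMem {m : ℕ} {T : Finset (Finset (ZMod m))}
    (hT : PIsTriangulation m T) {d : Finset (ZMod m)} (hd : PIsDiag m d) (hdT : d ∉ T) :
    ∃ e ∈ T, PCross m d e := by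
  by_contra! h
  exact hdT (hT.2.2 d hd h)

lemma PEdgeOrDiag.symm {m : ℕ} {T : Finset (Finset (ZMod m))} {a b : ZMod m}
    (h : PEdgeOrDiag m T a b) : PEdgeOrDiag m T b a := by
  unfold PEdgeOrDiag at *
  rw [Finset.pair_comm]
  tauto

lemma PTriangleOf.swap_right {m : ℕ} {T : Finset (Finset (ZMod m))} {a b c : ZMod m}
    (h : PTriangleOf m T a b c) : PTriangleOf m T a c b := by
  obtain ⟨hab, hbc, hac, eab, ebc, eac⟩ := h
  exact ⟨hac, hbc.symm, hab, eac, ebc.symm, eab⟩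

section Flip

variable {m : ℕ} [NeZero m] {T₁ T₂ : Finset (Finset (ZMod m))} {p q r s x y : ZMod m}

lemma IsQuadSide.mem_of_unique_pcross (h1 : PIsTriangulation m T₁) (ho : InCyclicOrder p q r s)
    (hqs : {q, s} ∈ T₁) (huniq : ∀ f ∈ T₁, PCross m {p, r} f → f = {q, s})
    (hside : IsQuadSide p q r s x y) (hdiag : PIsDiag m {x, y}) : {x, y} ∈ T₁ := by
  by_contra hxy
  obtain ⟨f, hf, hcross⟩ := h1.exists_pcross_of_notMem hdiag hxy
  rcases hside.pcross_diag_of_pcross ho hcross with hfqs | hfpr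
  · exact h1.2.1 f hf _ hqs hfqs
  · rw [huniq f hf hfpr.symm] at hcross
    exact hside.not_pcross hcross

lemma IsQuadSide.mem_of_flip (h1 : PIsTriangulation m T₁) (h2 : PIsTriangulation m T₂)
    (hone : ∀ d ∈ T₂, d ∉ T₁ → ∃! e, e ∈ T₁ ∧ PCross m d e) (ho : InCyclicOrder p q r s)
    (hpr : {p, r} ∈ T₂) (hqs : {q, s} ∈ T₁) (hside : IsQuadSide p q r s x y)
    (hdiag : PIsDiag m {x, y}) (hxy : {x, y} ∈ T₁) : {x, y} ∈ T₂ := by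
  by_contra hxy₂
  obtain ⟨f, hf, hcross⟩ := h2.exists_pcross_of_notMem hdiag hxy₂
  have hf₁ : f ∉ T₁ := fun hf₁ => h1.2.1 _ hxy f hf₁ hcross
  obtain ⟨e, -, he⟩ := hone f hf hf₁
  rcases hside.pcross_diag_of_pcross ho hcross with hfqs | hfpr
  · exact hside.ne_diag ho ((he _ ⟨hxy, hcross.symm⟩).trans (he _ ⟨hqs, hfqs⟩).symm)
  · exact h2.2.1 f hf _ hpr hfpr

lemma IsQuadSide.edgeOrDiag_of_flip (h1 : PIsTriangulation m T₁) (h2 : PIsTriangulation m T₂)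
    (hone : ∀ d ∈ T₂, d ∉ T₁ → ∃! e, e ∈ T₁ ∧ PCross m d e) (ho : InCyclicOrder p q r s)
    (hpr₂ : {p, r} ∈ T₂) (hpr₁ : {p, r} ∉ T₁) (hqs : {q, s} ∈ T₁)
    (hside : IsQuadSide p q r s x y) : PEdgeOrDiag m T₂ x y := by
  by_cases hadj : y - x = 1 ∨ x - y = 1
  · exact Or.inl hadj
  obtain ⟨hyx, hxy⟩ := not_or.mp hadj
  have hdiag : PIsDiag m {x, y} := ⟨x, y, rfl, hside.ne ho, hxy, hyx⟩
  obtain ⟨e, -, he⟩ := hone _ hpr₂ hpr₁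
  have huniq : ∀ f ∈ T₁, PCross m {p, r} f → f = {q, s} := fun f hf hcross =>
    (he f ⟨hf, hcross⟩).trans (he _ ⟨hqs, ho.pcross⟩).symm
  exact Or.inr (hside.mem_of_flip h1 h2 hone ho hpr₂ hqs hdiag
    (hside.mem_of_unique_pcross h1 ho hqs huniq hdiag))

lemma InCyclicOrder.triangles_of_flip (h1 : PIsTriangulation m T₁) (h2 : PIsTriangulation m T₂)
    (hone : ∀ d ∈ T₂, d ∉ T₁ → ∃! e, e ∈ T₁ ∧ PCross m d e) (ho : InCyclicOrder p q r s)
    (hpr₂ : {p, r} ∈ T₂) (hpr₁ : {p, r} ∉ T₁) (hqs : {q, s} ∈ T₁) :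
    PTriangleOf m T₂ p q r ∧ PTriangleOf m T₂ p r s := by
  have side := fun {x y} (hside : IsQuadSide p q r s x y) =>
    hside.edgeOrDiag_of_flip h1 h2 hone ho hpr₂ hpr₁ hqs
  obtain ⟨hpq, hqr, hpr, hrs, hps⟩ := ho.pairwise_ne
  exact ⟨⟨hpq, hqr, hpr, side (.inl ⟨rfl, rfl⟩), side (.inr (.inl ⟨rfl, rfl⟩)), .inr hpr₂⟩,
    ⟨hpr, hrs, hps, .inr hpr₂, side (.inr (.inr (.inl ⟨rfl, rfl⟩))),
      (side (.inr (.inr (.inr ⟨rfl, rfl⟩)))).symm⟩⟩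

end Flip

/-- If every diagonal of `T₂` not in `T₁` crosses exactly one diagonal of `T₁`, then `T₂` is
obtained from `T₁` by simultaneously flipping diagonals of `T₁`: each `pr ∈ T₂ \ T₁` crosses a
unique `qs ∈ T₁`, and `pqr`, `prs` are triangles of `T₂`. -/
theorem stmt_15 (m : ℕ) (hm : 5 ≤ m) (T₁ T₂ : Finset (Finset (ZMod m)))
    (h1 : PIsTriangulation m T₁) (h2 : PIsTriangulation m T₂)
    (hone : ∀ d ∈ T₂, d ∉ T₁ → ∃! e, e ∈ T₁ ∧ PCross m d e) :
    ∀ d ∈ T₂, d ∉ T₁ →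
      (∃! e, e ∈ T₁ ∧ PCross m d e) ∧
      ∀ e ∈ T₁, PCross m d e →
        ∀ p r q s : ZMod m, d = {p, r} → e = {q, s} →
          PTriangleOf m T₂ p q r ∧ PTriangleOf m T₂ p r s := by
  have : NeZero m := ⟨by omega⟩
  intro d hd₂ hd₁
  refine ⟨hone d hd₂ hd₁, ?_⟩
  rintro e he hcross p r q s rfl rfl
  rcases hcross.inCyclicOrder_or with ho | ho
  · exact ho.triangles_of_flip h1 h2 hone hd₂ hd₁ he
  · rw [Finset.pair_comm] at he
    obtain ⟨hpsr, hprq⟩ := ho.triangles_of_flip h1 h2 hone hd₂ hd₁ he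
    exact ⟨hprq.swap_right, hpsr.swap_right⟩
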